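/- arXiv:1508.07109 — 7 statements merged into one kernel-verified Lean document; each statement's English description precedes it below -/
import Mathlib

section
/- Let X be a finite probability space with measure μ and let F be a finite family of functions X → ℝ that is Laplace pseudorandom, i.e., for all real coefficients (λ_φ), log E_μ exp(Σ_{φ∈F} λ_φ φ) ≤ (1/2) Σ_{φ∈F} λ_φ². Then for every density f ∈ Δ_X, Σ_{φ∈F} ⟨f, φ⟩² ≤ 2 Ent_μ(f). -/
open Finset Real

/-!
The Donsker–Varadhan (Gibbs) variational inequality
`⟨f, g⟩ ≤ Ent_μ(f) + log E_μ exp g`, which is pointwise Fenchel–Young duality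
between `t ↦ t log t - t` and `exp`, applied to `g = Σ ⟨f, φ⟩ φ`, turns the Laplace bound
`log E_μ exp g ≤ ½ Σ ⟨f, φ⟩²` into `Σ ⟨f, φ⟩² ≤ Ent_μ(f) + ½ Σ ⟨f, φ⟩²`.
-/

theorem Real.mul_le_mul_log_sub_add_exp {a : ℝ} (ha : 0 ≤ a) (b : ℝ) :
    a * b ≤ a * log a - a + exp b := by
  rcases ha.eq_or_lt with rfl | ha
  · simpa using (exp_pos b).le
  · have h := mul_le_mul_of_nonneg_left (add_one_le_exp (b - log a)) ha.le
    rw [exp_sub, exp_log ha, mul_div_cancel₀ _ ha.ne'] at h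
    linarith

theorem sum_mul_mul_le_sum_mul_mul_log_add_log_sum_mul_exp {X : Type*} [Fintype X]
    {μ f : X → ℝ} (hμ0 : ∀ x, 0 ≤ μ x) (hf0 : ∀ x, 0 ≤ f x) (hf1 : ∑ x, μ x * f x = 1)
    (g : X → ℝ) :
    ∑ x, μ x * (f x * g x) ≤ ∑ x, μ x * (f x * log (f x)) + log (∑ x, μ x * exp (g x)) := by
  set Z := ∑ x, μ x * exp (g x)
  have hZ : 0 < Z := by
    obtain ⟨x₀, -, hx₀⟩ := exists_ne_zero_of_sum_ne_zero (hf1 ▸ one_ne_zero)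
    have hμx₀ : 0 < μ x₀ := (hμ0 x₀).lt_of_ne' (left_ne_zero_of_mul hx₀)
    exact sum_pos' (fun x _ => mul_nonneg (hμ0 x) (exp_pos _).le)
      ⟨x₀, mem_univ _, mul_pos hμx₀ (exp_pos _)⟩
  have young (x : X) : μ x * (f x * g x) - log Z * (μ x * f x) ≤
      μ x * (f x * log (f x)) - μ x * f x + μ x * exp (g x) / Z := by
    have h := Real.mul_le_mul_log_sub_add_exp (hf0 x) (g x - log Z)
    rw [exp_sub, exp_log hZ] at h
    calc μ x * (f x * g x) - log Z * (μ x * f x) = μ x * (f x * (g x - log Z)) := by ring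
      _ ≤ μ x * (f x * log (f x) - f x + exp (g x) / Z) := mul_le_mul_of_nonneg_left h (hμ0 x)
      _ = _ := by ring
  have h := sum_le_sum fun x (_ : x ∈ univ) => young x
  rw [sum_add_distrib, sum_sub_distrib, sum_sub_distrib, ← mul_sum, ← sum_div, hf1,
    div_self hZ.ne'] at h
  linarith

theorem laplace_pseudorandom_spectrum_bound_general {X ι : Type*} [Fintype X] (μ : X → ℝ)
    (hμ0 : ∀ x, 0 ≤ μ x)
    (F : Finset ι) (φ : ι → X → ℝ)
    (hLaplace : ∀ lam : ι → ℝ,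
      Real.log (∑ x, μ x * Real.exp (∑ i ∈ F, lam i * φ i x))
        ≤ (1 / 2) * ∑ i ∈ F, (lam i) ^ 2)
    (f : X → ℝ) (hf0 : ∀ x, 0 ≤ f x) (hf1 : ∑ x, μ x * f x = 1) :
    ∑ i ∈ F, (∑ x, μ x * (f x * φ i x)) ^ 2
      ≤ 2 * ∑ x, μ x * (f x * Real.log (f x)) := by
  set c : ι → ℝ := fun i => ∑ x, μ x * (f x * φ i x)
  have hpair : ∑ x, μ x * (f x * ∑ i ∈ F, c i * φ i x) = ∑ i ∈ F, c i ^ 2 := by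
    have h (x : X) :
        μ x * (f x * ∑ i ∈ F, c i * φ i x) = ∑ i ∈ F, c i * (μ x * (f x * φ i x)) := by
      rw [mul_sum, mul_sum]
      exact sum_congr rfl fun i _ => by ring
    simp_rw [h, sq]
    rw [sum_comm]
    simp_rw [← mul_sum]
    rfl
  have hduality := sum_mul_mul_le_sum_mul_mul_log_add_log_sum_mul_exp hμ0 hf0 hf1
    (fun x => ∑ i ∈ F, c i * φ i x)
  linarith [hLaplace c]

/-- If a finite family `F` of observables on a finite probability space `(X, μ)`
is Laplace pseudorandom, then for every density `f`,
`Σ_{φ ∈ F} ⟨f, φ⟩² ≤ 2 Ent_μ(f)`. -/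
theorem laplace_pseudorandom_spectrum_bound {X ι : Type*} [Fintype X] (μ : X → ℝ)
    (hμ0 : ∀ x, 0 ≤ μ x) (hμ1 : ∑ x, μ x = 1)
    (F : Finset ι) (φ : ι → X → ℝ)
    (hLaplace : ∀ lam : ι → ℝ,
      Real.log (∑ x, μ x * Real.exp (∑ i ∈ F, lam i * φ i x))
        ≤ (1 / 2) * ∑ i ∈ F, (lam i) ^ 2)
    (f : X → ℝ) (hf0 : ∀ x, 0 ≤ f x) (hf1 : ∑ x, μ x * f x = 1) :
    ∑ i ∈ F, (∑ x, μ x * (f x * φ i x)) ^ 2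
      ≤ 2 * ∑ x, μ x * (f x * Real.log (f x)) :=
  laplace_pseudorandom_spectrum_bound_general μ hμ0 F φ hLaplace f hf0 hf1
end

section
/- Let X be a finite probability space with measure μ, let ψ : X → ℝ satisfy 0 ≤ ψ(x) ≤ B for all x, let h = exp(ψ), and let p_m(x) = Σ_{j≤m} x^j/j!. If B^{m+1}/(m+1)! ≤ η/2 for some 0 < η < 1, then the density h̃ = p_m(ψ)/E_μ[p_m(ψ)] satisfies ‖h/E_μ h − h̃‖₁ ≤ η, where ‖·‖₁ denotes the L¹(μ) norm. -/
open Finset Real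

set_option maxHeartbeats 1000000 in
lemma exp_tail_bound {t : ℝ} (ht : 0 ≤ t) (m : ℕ) :
    Real.exp t - ∑ j ∈ Finset.range (m + 1), t ^ j / (Nat.factorial j) ≤
      t ^ (m + 1) / (Nat.factorial (m + 1)) * Real.exp t := by
  have hsum : Summable (fun n : ℕ => t ^ n / n.factorial) := Real.summable_pow_div_factorial t
  have hexp : Real.exp t = ∑' n : ℕ, t ^ n / n.factorial := by
    rw [Real.exp_eq_exp_ℝ, NormedSpace.exp_eq_tsum_div]
  have hsplit := Summable.sum_add_tsum_nat_add (m + 1) hsum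
  have htail : Real.exp t - ∑ j ∈ Finset.range (m + 1), t ^ j / (Nat.factorial j)
      = ∑' k : ℕ, t ^ (k + (m + 1)) / Nat.factorial (k + (m + 1)) := by
    rw [hexp, ← hsplit]; ring
  rw [htail]
  have hle : ∀ k : ℕ, t ^ (k + (m + 1)) / Nat.factorial (k + (m + 1))
      ≤ t ^ (m + 1) / Nat.factorial (m + 1) * (t ^ k / Nat.factorial k) := by
    intro k
    have h1 : (Nat.factorial (m + 1) * Nat.factorial k : ℕ) ≤ Nat.factorial (k + (m + 1)) := by
      rw [add_comm k (m + 1)]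
      exact Nat.le_of_dvd (Nat.factorial_pos _)
        (Nat.factorial_mul_factorial_dvd_factorial_add (m + 1) k)
    have h1' : (Nat.factorial (m + 1) * Nat.factorial k : ℝ) ≤ Nat.factorial (k + (m + 1)) := by
      exact_mod_cast h1
    rw [div_mul_div_comm, ← pow_add, add_comm (m+1) k]
    gcongr
  calc ∑' k : ℕ, t ^ (k + (m + 1)) / Nat.factorial (k + (m + 1))
      ≤ ∑' k : ℕ, t ^ (m + 1) / Nat.factorial (m + 1) * (t ^ k / Nat.factorial k) :=
        Summable.tsum_le_tsum hle ((summable_nat_add_iff (m + 1)).2 hsum) (hsum.mul_left _)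
    _ = t ^ (m + 1) / Nat.factorial (m + 1) * Real.exp t := by rw [tsum_mul_left, ← hexp]

/-- Truncating the exponential: if `0 ≤ ψ ≤ B` pointwise, `h = exp ψ`,
`p_m` is the degree-`m` Taylor polynomial of `exp`, and
`B^{m+1}/(m+1)! ≤ η/2` with `0 < η < 1`, then the normalized truncation
`p_m(ψ)/𝔼_μ p_m(ψ)` is within `η` of `h/𝔼_μ h` in `L¹(μ)`. -/
theorem truncate_exponential {X : Type*} [Fintype X] (μ : X → ℝ)
    (hμ0 : ∀ x, 0 ≤ μ x) (hμ1 : ∑ x, μ x = 1)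
    (B η : ℝ) (hη0 : 0 < η) (hη1 : η < 1) (m : ℕ)
    (ψ : X → ℝ) (hψ0 : ∀ x, 0 ≤ ψ x) (hψB : ∀ x, ψ x ≤ B)
    (htrunc : B ^ (m + 1) / (Nat.factorial (m + 1)) ≤ η / 2) :
    ∑ x, μ x *
        |Real.exp (ψ x) / (∑ y, μ y * Real.exp (ψ y))
          - (∑ j ∈ Finset.range (m + 1), (ψ x) ^ j / (Nat.factorial j))
              / (∑ y, μ y * ∑ j ∈ Finset.range (m + 1), (ψ y) ^ j / (Nat.factorial j))|
      ≤ η := by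
  set p : X → ℝ := fun x => ∑ j ∈ Finset.range (m + 1), (ψ x) ^ j / (Nat.factorial j) with hpdef
  set h : X → ℝ := fun x => Real.exp (ψ x) with hhdef
  set Eh : ℝ := ∑ y, μ y * h y with hEh
  set Ep : ℝ := ∑ y, μ y * p y with hEp
  have hp1 : ∀ x, (1 : ℝ) ≤ p x := by
    intro x
    have h0 : (0 : ℕ) ∈ Finset.range (m + 1) := by simp
    have := Finset.single_le_sum (f := fun j => (ψ x) ^ j / (Nat.factorial j))
      (fun j _ => div_nonneg (pow_nonneg (hψ0 x) _) (Nat.cast_nonneg _)) h0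
    simpa using this
  have hph : ∀ x, p x ≤ h x := fun x => Real.sum_le_exp_of_nonneg (hψ0 x) _
  have hh1 : ∀ x, (1 : ℝ) ≤ h x := fun x => Real.one_le_exp (hψ0 x)
  have hrem : ∀ x, h x - p x ≤ η / 2 * h x := by
    intro x
    have h1 := exp_tail_bound (hψ0 x) m
    have h2 : (ψ x) ^ (m + 1) / (Nat.factorial (m + 1)) ≤ η / 2 := by
      refine le_trans ?_ htrunc
      gcongr
      exacts [hψ0 x, hψB x]
    have h3 : (ψ x) ^ (m + 1) / (Nat.factorial (m + 1)) * Real.exp (ψ x)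
        ≤ η / 2 * Real.exp (ψ x) :=
      mul_le_mul_of_nonneg_right h2 (Real.exp_pos _).le
    exact le_trans h1 h3
  have hEh1 : (1 : ℝ) ≤ Eh := by
    rw [hEh, ← hμ1]
    exact Finset.sum_le_sum fun y _ => by
      nlinarith [hh1 y, hμ0 y]
  have hEp1 : (1 : ℝ) ≤ Ep := by
    rw [hEp, ← hμ1]
    exact Finset.sum_le_sum fun y _ => by nlinarith [hp1 y, hμ0 y]
  have hEhpos : 0 < Eh := lt_of_lt_of_le one_pos hEh1
  have hEppos : 0 < Ep := lt_of_lt_of_le one_pos hEp1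
  have hEpEh : Ep ≤ Eh :=
    Finset.sum_le_sum fun y _ => mul_le_mul_of_nonneg_left (hph y) (hμ0 y)
  have hdiff : Eh - Ep ≤ η / 2 * Eh := by
    have : Eh - Ep = ∑ y, μ y * (h y - p y) := by
      rw [hEh, hEp, ← Finset.sum_sub_distrib]
      exact Finset.sum_congr rfl fun y _ => by ring
    rw [this]
    calc ∑ y, μ y * (h y - p y) ≤ ∑ y, μ y * (η / 2 * h y) :=
          Finset.sum_le_sum fun y _ => mul_le_mul_of_nonneg_left (hrem y) (hμ0 y)
      _ = η / 2 * Eh := by rw [hEh, Finset.mul_sum]; exact Finset.sum_congr rfl fun y _ => by ring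
  set c : ℝ := (Eh - Ep) / (Eh * Ep) with hc
  have hcnn : 0 ≤ c := by
    apply div_nonneg (by linarith) (by positivity)
  have hpoint : ∀ x, |h x / Eh - p x / Ep| ≤ (h x - p x) / Eh + p x * c := by
    intro x
    have heq : h x / Eh - p x / Ep = (h x - p x) / Eh - p x * c := by
      rw [hc]
      field_simp
      ring
    rw [heq]
    refine le_trans (abs_sub _ _) ?_
    rw [abs_of_nonneg (mul_nonneg (by linarith [hp1 x]) hcnn),
      abs_of_nonneg (div_nonneg (by linarith [hph x]) hEhpos.le)]
  calc ∑ x, μ x * |h x / Eh - p x / Ep|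
      ≤ ∑ x, μ x * ((h x - p x) / Eh + p x * c) :=
        Finset.sum_le_sum fun x _ => mul_le_mul_of_nonneg_left (hpoint x) (hμ0 x)
    _ = (Eh - Ep) / Eh + Ep * c := by
        rw [Finset.sum_congr rfl (fun x _ => mul_add (μ x) _ _), Finset.sum_add_distrib]
        congr 1
        · rw [hEh, hEp, ← Finset.sum_sub_distrib, Finset.sum_div]
          exact Finset.sum_congr rfl fun x _ => by ring
        · rw [hEp, Finset.sum_mul]
          exact Finset.sum_congr rfl fun x _ => by ring
    _ ≤ η / 2 + η / 2 := by
        have h1 : (Eh - Ep) / Eh ≤ η / 2 := by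
          rw [div_le_iff₀ hEhpos]; linarith
        have h2 : Ep * c = (Eh - Ep) / Eh := by
          rw [hc]; field_simp
        rw [h2]; linarith
    _ = η := by ring
end

section
/- Let X be a finite probability space with measure μ, f a density, and (φ_s)_{s∈[0,T]} a piecewise-constant family of bounded functions. Define g_t = exp(∫₀ᵗ φ_s ds) / E_μ exp(∫₀ᵗ φ_s ds). Then for almost every t ∈ [0,T), (d/dt) D_μ(f ‖ g_t) = ⟨φ_t, g_t − f⟩. -/
open Finset Real

/-!
Write `g_s = exp(Ψ + sφ) / Z(s)` with `Z(s) = 𝔼_μ exp(Ψ + sφ)`. Since `𝔼_μ f = 1`,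
`D_μ(f ‖ g_s) = 𝔼_μ[f (log f - Ψ)] - s ⟨φ, f⟩ + log Z(s)`, an affine function of `s` plus
`log Z`, and `(log Z)'(s) = 𝔼_μ[φ exp(Ψ + sφ)] / Z(s) = ⟨φ, g_s⟩`.
-/

section GibbsFlow

variable {X : Type*} [Fintype X] (μ Ψ φ : X → ℝ)

noncomputable def expPartition (s : ℝ) : ℝ :=
  ∑ y, μ y * exp (Ψ y + s * φ y)

noncomputable def gibbs (s : ℝ) (x : X) : ℝ :=
  exp (Ψ x + s * φ x) / expPartition μ Ψ φ s

variable {μ}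

theorem expPartition_pos (hμ0 : ∀ x, 0 ≤ μ x) (hμ : 0 < ∑ x, μ x) (s : ℝ) :
    0 < expPartition μ Ψ φ s := by
  obtain ⟨x, -, hx⟩ := exists_lt_of_sum_lt (f := fun _ => (0 : ℝ)) (by simpa using hμ)
  exact sum_pos' (fun y _ => mul_nonneg (hμ0 y) (exp_pos _).le)
    ⟨x, mem_univ x, mul_pos hx (exp_pos _)⟩

theorem hasDerivAt_expPartition (t : ℝ) :
    HasDerivAt (expPartition μ Ψ φ) (∑ y, μ y * (φ y * exp (Ψ y + t * φ y))) t := by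
  refine HasDerivAt.fun_sum fun y _ => ?_
  have hexponent : HasDerivAt (fun s : ℝ => Ψ y + s * φ y) (φ y) t := by
    simpa using ((hasDerivAt_id t).mul_const (φ y)).const_add (Ψ y)
  simpa [mul_comm] using hexponent.exp.const_mul (μ y)

theorem hasDerivAt_log_expPartition {t : ℝ} (hZ : expPartition μ Ψ φ t ≠ 0) :
    HasDerivAt (fun s => log (expPartition μ Ψ φ s)) (∑ y, μ y * (φ y * gibbs μ Ψ φ t y)) t := by
  convert (hasDerivAt_expPartition Ψ φ t).log hZ using 1
  simp only [gibbs, sum_div, mul_div_assoc]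

theorem log_gibbs {s : ℝ} (hZ : expPartition μ Ψ φ s ≠ 0) (x : X) :
    log (gibbs μ Ψ φ s x) = Ψ x + s * φ x - log (expPartition μ Ψ φ s) := by
  rw [gibbs, log_div (exp_ne_zero _) hZ, log_exp]

theorem mul_log_div_gibbs {s : ℝ} (hZ : expPartition μ Ψ φ s ≠ 0) (a : ℝ) (x : X) :
    a * log (a / gibbs μ Ψ φ s x) =
      a * (log a - Ψ x) - s * (a * φ x) + a * log (expPartition μ Ψ φ s) := by
  rcases eq_or_ne a 0 with rfl | ha
  · simp
  have hg : gibbs μ Ψ φ s x ≠ 0 := div_ne_zero (exp_ne_zero _) hZ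
  rw [log_div ha hg, log_gibbs Ψ φ hZ]
  ring

theorem relEntropy_gibbs {s : ℝ} (hZ : expPartition μ Ψ φ s ≠ 0) (f : X → ℝ) :
    ∑ x, μ x * (f x * log (f x / gibbs μ Ψ φ s x)) =
      ∑ x, μ x * (f x * (log (f x) - Ψ x)) - s * ∑ x, μ x * (f x * φ x) +
        (∑ x, μ x * f x) * log (expPartition μ Ψ φ s) := by
  rw [mul_sum, sum_mul, ← sum_sub_distrib, ← sum_add_distrib]
  exact sum_congr rfl fun x _ => by rw [mul_log_div_gibbs Ψ φ hZ]; ring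

end GibbsFlow

theorem deriv_relative_entropy_flow_general {X : Type*} [Fintype X] (μ : X → ℝ)
    (hμ0 : ∀ x, 0 ≤ μ x) (hμ1 : ∑ x, μ x = 1)
    (f : X → ℝ) (hf1 : ∑ x, μ x * f x = 1)
    (Ψ φ : X → ℝ)
    (g : ℝ → X → ℝ)
    (hg : ∀ s x, g s x =
      Real.exp (Ψ x + s * φ x) / ∑ y, μ y * Real.exp (Ψ y + s * φ y))
    (t : ℝ) :
    HasDerivAt (fun s => ∑ x, μ x * (f x * Real.log (f x / g s x)))
      (∑ x, μ x * (φ x * (g t x - f x))) t := by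
  obtain rfl : g = gibbs μ Ψ φ := funext₂ hg
  have hZ (s : ℝ) : expPartition μ Ψ φ s ≠ 0 :=
    (expPartition_pos Ψ φ hμ0 (hμ1 ▸ one_pos) s).ne'
  have hD : (fun s => ∑ x, μ x * (f x * log (f x / gibbs μ Ψ φ s x))) = fun s =>
      ∑ x, μ x * (f x * (log (f x) - Ψ x)) - s * ∑ x, μ x * (f x * φ x) +
        log (expPartition μ Ψ φ s) := by
    funext s
    rw [relEntropy_gibbs Ψ φ (hZ s), hf1, one_mul]
  rw [hD]
  have hlin : HasDerivAt (fun s => ∑ x, μ x * (f x * (log (f x) - Ψ x)) - s * ∑ x, μ x * (f x * φ x))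
      (-∑ x, μ x * (f x * φ x)) t := by
    simpa using ((hasDerivAt_id t).mul_const (∑ x, μ x * (f x * φ x))).const_sub _
  refine (hlin.add (hasDerivAt_log_expPartition Ψ φ (hZ t))).congr_deriv ?_
  rw [neg_add_eq_sub, ← sum_sub_distrib]
  exact sum_congr rfl fun x _ => by ring

/-- Derivative of the relative entropy along the exponential flow: with
`g_t = exp(Ψ + tφ)/𝔼_μ exp(Ψ + tφ)` (the constant-`φ` piece of a
piecewise-constant flow) and `f` a density,
`(d/dt) D_μ(f ‖ g_t) = ⟨φ, g_t − f⟩`. -/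
theorem deriv_relative_entropy_flow {X : Type*} [Fintype X] (μ : X → ℝ)
    (hμ0 : ∀ x, 0 ≤ μ x) (hμ1 : ∑ x, μ x = 1)
    (f : X → ℝ) (hf0 : ∀ x, 0 ≤ f x) (hf1 : ∑ x, μ x * f x = 1)
    (Ψ φ : X → ℝ)
    (g : ℝ → X → ℝ)
    (hg : ∀ s x, g s x =
      Real.exp (Ψ x + s * φ x) / ∑ y, μ y * Real.exp (Ψ y + s * φ y))
    (t : ℝ) :
    HasDerivAt (fun s => ∑ x, μ x * (f x * Real.log (f x / g s x)))
      (∑ x, μ x * (φ x * (g t x - f x))) t :=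
  deriv_relative_entropy_flow_general μ hμ0 hμ1 f hf1 Ψ φ g hg t
end

section
/- Let G be a finite abelian group with uniform measure μ, and let R(x) = Π_{i=1}^{d} (1 + ε_i φ_i(x)) where each φ_i is the real or imaginary part of a character u_{γ_i} of G and ε_i ∈ {−1,0,1}. Then the set Spec₀(R) = {γ ∈ Ĝ : R̂(γ) ≠ 0} is covered by a set Λ ⊆ Ĝ with |Λ| ≤ d, meaning every γ ∈ Spec₀(R) can be written as Σ_{λ∈Λ} ε_λ λ with ε_λ ∈ {−1,0,1}. -/
/-!
Writing `Re z = (z + z̄)/2` and `Im z = (z - z̄)/(2i)`, each factor `1 + εᵢ φᵢ` is a combination of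
`u (-γᵢ)`, `u 0` and `u γᵢ`; expanding the product, `R` is a combination of the characters at the
frequencies `∑ sᵢ γᵢ` with `sᵢ ∈ {-1, 0, 1}`, so by orthogonality `R̂` vanishes off these.

These frequencies are covered one `γ` at a time. Given `Λ`, let `K` be maximal such that
`γ, 2γ, …, Kγ` are distinct elements of `Λ`. Adding `γ` to a signed sum over `Λ` gives a signed sum
over the rest of `Λ` plus `(m + 1)γ` with `2|m| ≤ K(K + 1)`. If `(K + 1)γ ∉ Λ`, adjoin it: every
integer of absolute value at most `k(k + 1)/2` is a signed sum of `1, …, k`. Otherwise `(K + 1)γ`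
repeats an earlier multiple, so `γ` has order at most `K` and `(m + 1)γ = rγ` with `0 ≤ r < K`.
-/

open Finset Complex ComplexConjugate

section SignedSums
variable {A : Type*} [AddCommGroup A]

def signedSums (Λ : Finset A) : Set A :=
  {α | ∃ η : A → ℤ, (∀ lam, η lam ∈ ({-1, 0, 1} : Set ℤ)) ∧ α = ∑ lam ∈ Λ, η lam • lam}

lemma zero_mem_signedSums (Λ : Finset A) : (0 : A) ∈ signedSums Λ :=
  ⟨0, fun _ => by simp, by simp⟩

lemma eq_zero_of_mem_signedSums_empty {α : A} (h : α ∈ signedSums (∅ : Finset A)) : α = 0 := by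
  obtain ⟨η, -, rfl⟩ := h
  exact sum_empty

lemma neg_mem_signedSums {Λ : Finset A} {α : A} (h : α ∈ signedSums Λ) : -α ∈ signedSums Λ := by
  obtain ⟨η, hη, rfl⟩ := h
  refine ⟨-η, fun l => ?_, by simp [neg_smul]⟩
  rcases hη l with h | h | h <;> simp_all

lemma signedSums_mono [DecidableEq A] {Λ Λ' : Finset A} (h : Λ ⊆ Λ') :
    signedSums Λ ⊆ signedSums Λ' := by
  rintro _ ⟨η, hη, rfl⟩
  refine ⟨fun l => if l ∈ Λ then η l else 0, fun l => ?_, ?_⟩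
  · dsimp only
    split_ifs
    · exact hη l
    · simp
  · rw [← sum_subset h fun l _ hl => by simp [hl]]
    exact sum_congr rfl fun l hl => by simp [hl]

lemma add_mem_signedSums_union [DecidableEq A] {S T : Finset A} (hST : Disjoint S T) {α β : A}
    (hα : α ∈ signedSums S) (hβ : β ∈ signedSums T) : α + β ∈ signedSums (S ∪ T) := by
  obtain ⟨η, hη, rfl⟩ := hα
  obtain ⟨θ, hθ, rfl⟩ := hβ
  refine ⟨fun l => if l ∈ S then η l else θ l, fun l => ?_, ?_⟩
  · dsimp only
    split_ifs
    · exact hη l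
    · exact hθ l
  · rw [sum_union hST]
    congr 1 <;> refine sum_congr rfl fun l hl => ?_
    · simp [hl]
    · simp [disjoint_right.mp hST hl]

lemma exists_add_of_mem_signedSums [DecidableEq A] {Λ M : Finset A} (hM : M ⊆ Λ) {α : A}
    (h : α ∈ signedSums Λ) : ∃ β ∈ signedSums (Λ \ M), ∃ δ ∈ signedSums M, α = β + δ := by
  obtain ⟨η, hη, rfl⟩ := h
  exact ⟨_, ⟨η, hη, rfl⟩, _, ⟨η, hη, rfl⟩, (sum_sdiff hM).symm⟩

lemma mem_signedSums_insert_iff [DecidableEq A] {M : Finset A} {x : A} (hx : x ∉ M) {α : A} :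
    α ∈ signedSums (insert x M) ↔
      ∃ t ∈ ({-1, 0, 1} : Set ℤ), ∃ β ∈ signedSums M, α = t • x + β := by
  constructor
  · rintro ⟨η, hη, rfl⟩
    exact ⟨η x, hη x, _, ⟨η, hη, rfl⟩, sum_insert hx⟩
  · rintro ⟨t, ht, _, ⟨η, hη, rfl⟩, rfl⟩
    refine ⟨Function.update η x t, fun l => ?_, ?_⟩
    · rcases eq_or_ne l x with rfl | hl
      · simpa using ht
      · simpa [hl] using hη l
    · rw [sum_insert hx, Function.update_self]
      congr 1
      exact sum_congr rfl fun l hl => by rw [Function.update_of_ne (ne_of_mem_of_not_mem hl hx)]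

lemma two_mul_le_mul_add_one (K : ℕ) : 2 * (K : ℤ) ≤ K * (K + 1) := by
  rcases K with _ | K
  · simp
  · push_cast
    nlinarith

lemma exists_sign_two_mul_abs_sub_le (K : ℕ) {m : ℤ} (hm : 2 * |m| ≤ ((K : ℤ) + 1) * (K + 2)) :
    ∃ t ∈ ({-1, 0, 1} : Set ℤ), 2 * |m - t * (K + 1)| ≤ (K : ℤ) * (K + 1) := by
  rcases le_or_gt ((K : ℤ) + 1) m with h | h
  · refine ⟨1, by simp, ?_⟩
    rw [abs_of_nonneg (by linarith)] at hm
    rw [abs_of_nonneg (by linarith)]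
    nlinarith
  rcases le_or_gt m (-((K : ℤ) + 1)) with h' | h'
  · refine ⟨-1, by simp, ?_⟩
    rw [abs_of_nonpos (by linarith)] at hm
    rw [abs_of_nonpos (by linarith)]
    nlinarith
  · refine ⟨0, by simp, ?_⟩
    rw [zero_mul, sub_zero]
    have : |m| ≤ K := abs_le.mpr ⟨by linarith, by linarith⟩
    linarith [two_mul_le_mul_add_one K]

section Multiples
variable [DecidableEq A] {γ : A} {K : ℕ}

def multiplesUpTo (γ : A) (K : ℕ) : Finset A := (Icc 1 K).image (· • γ)

lemma multiplesUpTo_zero : multiplesUpTo γ 0 = ∅ := by simp [multiplesUpTo]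

lemma multiplesUpTo_succ : multiplesUpTo γ (K + 1) = insert ((K + 1) • γ) (multiplesUpTo γ K) := by
  rw [multiplesUpTo, ← insert_Icc_right_eq_Icc_add_one (by omega), image_insert]
  rfl

lemma injOn_Icc_succ_iff :
    Set.InjOn (· • γ) (Set.Icc 1 (K + 1)) ↔
      Set.InjOn (· • γ) (Set.Icc 1 K) ∧ (K + 1) • γ ∉ multiplesUpTo γ K := by
  rw [← Set.insert_Icc_right_eq_Icc_add_one (by omega), Set.injOn_insert (by simp)]
  simp [multiplesUpTo]

lemma zsmul_mem_signedSums_multiplesUpTo (hinj : Set.InjOn (· • γ) (Set.Icc 1 K)) {m : ℤ}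
    (hm : 2 * |m| ≤ (K : ℤ) * (K + 1)) : m • γ ∈ signedSums (multiplesUpTo γ K) := by
  induction K generalizing m with
  | zero =>
    obtain rfl : m = 0 := abs_nonpos_iff.mp (by linarith [show 2 * |m| ≤ 0 by simpa using hm])
    rw [zero_smul]
    exact zero_mem_signedSums _
  | succ K ih =>
    obtain ⟨hinjK, hK⟩ := injOn_Icc_succ_iff.mp hinj
    obtain ⟨t, ht, hle⟩ := exists_sign_two_mul_abs_sub_le K (by exact_mod_cast hm)
    rw [multiplesUpTo_succ, mem_signedSums_insert_iff hK]
    refine ⟨t, ht, _, ih hinjK hle, ?_⟩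
    rw [← natCast_zsmul, smul_smul, ← add_smul]
    congr 1
    push_cast
    ring

lemma exists_zsmul_of_mem_signedSums_multiplesUpTo (hinj : Set.InjOn (· • γ) (Set.Icc 1 K))
    {α : A} (h : α ∈ signedSums (multiplesUpTo γ K)) :
    ∃ m : ℤ, 2 * |m| ≤ (K : ℤ) * (K + 1) ∧ α = m • γ := by
  induction K generalizing α with
  | zero =>
    rw [multiplesUpTo_zero] at h
    exact ⟨0, by simp, by simp [eq_zero_of_mem_signedSums_empty h]⟩
  | succ K ih =>
    obtain ⟨hinjK, hK⟩ := injOn_Icc_succ_iff.mp hinj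
    rw [multiplesUpTo_succ, mem_signedSums_insert_iff hK] at h
    obtain ⟨t, ht, β, hβ, rfl⟩ := h
    obtain ⟨m, hm, rfl⟩ := ih hinjK hβ
    refine ⟨t * (K + 1) + m, ?_, ?_⟩
    · have ht' : |t| ≤ 1 := by rcases ht with rfl | rfl | rfl <;> simp
      have := abs_add_le (t * (K + 1)) m
      rw [abs_mul, abs_of_nonneg (by positivity : (0 : ℤ) ≤ K + 1)] at this
      push_cast
      nlinarith
    · rw [← natCast_zsmul, smul_smul, ← add_smul]
      push_cast
      rfl

lemma zsmul_mem_signedSums_multiplesUpTo_of_succ_mem (hinj : Set.InjOn (· • γ) (Set.Icc 1 K))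
    (hK : (K + 1) • γ ∈ multiplesUpTo γ K) (m : ℤ) : m • γ ∈ signedSums (multiplesUpTo γ K) := by
  obtain ⟨i, hi, hiK⟩ := mem_image.mp hK
  rw [mem_Icc] at hi
  have hzero : (K + 1 - i) • γ = 0 := by
    rw [← add_right_cancel_iff (a := i • γ), ← add_nsmul, Nat.sub_add_cancel (by omega), hiK,
      zero_add]
  have hpos : 0 < addOrderOf γ :=
    addOrderOf_pos_iff.mpr (isOfFinAddOrder_iff_nsmul_eq_zero.mpr ⟨_, by omega, hzero⟩)
  have hle : addOrderOf γ ≤ K := (addOrderOf_le_of_nsmul_eq_zero (by omega) hzero).trans (by omega)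
  rw [← mod_addOrderOf_zsmul]
  refine zsmul_mem_signedSums_multiplesUpTo hinj ?_
  have h0 := Int.emod_nonneg m (by omega : (addOrderOf γ : ℤ) ≠ 0)
  have h1 := Int.emod_lt_of_pos m (by omega : (0 : ℤ) < addOrderOf γ)
  rw [abs_of_nonneg h0]
  linarith [two_mul_le_mul_add_one K]

lemma exists_multiplesUpTo_subset (Λ : Finset A) (γ : A) :
    ∃ K, Set.InjOn (· • γ) (Set.Icc 1 K) ∧ multiplesUpTo γ K ⊆ Λ ∧
      ((K + 1) • γ ∈ Λ → (K + 1) • γ ∈ multiplesUpTo γ K) := by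
  classical
  let P K := Set.InjOn (· • γ) (Set.Icc 1 K) ∧ multiplesUpTo γ K ⊆ Λ
  have hbound : ∀ K, P K → K ≤ #Λ := fun K ⟨hinj, hsub⟩ => by
    have := card_le_card hsub
    rwa [multiplesUpTo, card_image_of_injOn (by rwa [coe_Icc]), Nat.card_Icc,
      Nat.add_sub_cancel] at this
  set K := Nat.findGreatest P #Λ
  have hP : P K := Nat.findGreatest_spec (P := P) (Nat.zero_le _)
    ⟨by simp, by simp [multiplesUpTo_zero]⟩
  have hnext : ¬ P (K + 1) := fun h =>
    Nat.findGreatest_is_greatest (Nat.lt_succ_self K) (hbound _ h) h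
  refine ⟨K, hP.1, hP.2, fun hmem => by_contra fun hnot => hnext ⟨?_, ?_⟩⟩
  · exact injOn_Icc_succ_iff.mpr ⟨hP.1, hnot⟩
  · rw [multiplesUpTo_succ]
    exact insert_subset hmem hP.2

end Multiples

lemma exists_superset_signedSums_add (Λ : Finset A) (γ : A) :
    ∃ Λ' : Finset A, Λ ⊆ Λ' ∧ #Λ' ≤ #Λ + 1 ∧ ∀ α ∈ signedSums Λ, γ + α ∈ signedSums Λ' := by
  classical
  obtain ⟨K, hinj, hsub, hnext⟩ := exists_multiplesUpTo_subset Λ γ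
  set M := multiplesUpTo γ K
  have hsplit : ∀ α ∈ signedSums Λ, ∃ β ∈ signedSums (Λ \ M),
      ∃ m : ℤ, 2 * |m| ≤ (K : ℤ) * (K + 1) ∧ γ + α = β + (m + 1) • γ := by
    intro α hα
    obtain ⟨β, hβ, δ, hδ, rfl⟩ := exists_add_of_mem_signedSums hsub hα
    obtain ⟨m, hm, rfl⟩ := exists_zsmul_of_mem_signedSums_multiplesUpTo hinj hδ
    exact ⟨β, hβ, m, hm, by rw [add_zsmul, one_zsmul]; abel⟩
  by_cases hK : (K + 1) • γ ∈ M
  · refine ⟨Λ, subset_rfl, by omega, fun α hα => ?_⟩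
    obtain ⟨β, hβ, m, -, hα⟩ := hsplit α hα
    rw [hα, ← sdiff_union_of_subset hsub]
    exact add_mem_signedSums_union sdiff_disjoint hβ
      (zsmul_mem_signedSums_multiplesUpTo_of_succ_mem hinj hK _)
  · have hKΛ : (K + 1) • γ ∉ Λ := mt hnext hK
    refine ⟨insert ((K + 1) • γ) Λ, subset_insert _ _, card_insert_le _ _, fun α hα => ?_⟩
    obtain ⟨β, hβ, m, hm, hα⟩ := hsplit α hα
    have hδ : (m + 1) • γ ∈ signedSums (multiplesUpTo γ (K + 1)) :=
      zsmul_mem_signedSums_multiplesUpTo (injOn_Icc_succ_iff.mpr ⟨hinj, hK⟩) (by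
        have := abs_add_le m 1
        rw [abs_one] at this
        push_cast
        nlinarith)
    have hdisj : Disjoint (Λ \ M) (multiplesUpTo γ (K + 1)) := by
      rw [multiplesUpTo_succ, disjoint_insert_right]
      exact ⟨fun h => hKΛ (mem_sdiff.mp h).1, sdiff_disjoint⟩
    have hunion : Λ \ M ∪ multiplesUpTo γ (K + 1) = insert ((K + 1) • γ) Λ := by
      rw [multiplesUpTo_succ, union_insert, sdiff_union_of_subset hsub]
    rw [hα, ← hunion]
    exact add_mem_signedSums_union hdisj hβ hδ

lemma exists_superset_signedSums_zsmul_add (Λ : Finset A) (γ : A) :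
    ∃ Λ' : Finset A, #Λ' ≤ #Λ + 1 ∧
      ∀ α ∈ signedSums Λ, ∀ c ∈ ({-1, 0, 1} : Set ℤ), c • γ + α ∈ signedSums Λ' := by
  classical
  obtain ⟨Λ', hsub, hcard, hadd⟩ := exists_superset_signedSums_add Λ γ
  refine ⟨Λ', hcard, fun α hα c hc => ?_⟩
  rcases hc with rfl | rfl | rfl
  · simpa [sub_eq_add_neg, add_comm] using neg_mem_signedSums (hadd _ (neg_mem_signedSums hα))
  · simpa using signedSums_mono hsub hα
  · simpa using hadd α hα

lemma exists_signedSums_cover {d : ℕ} (γ : Fin d → A) :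
    ∃ Λ : Finset A, #Λ ≤ d ∧ ∀ s : Fin d → ℤ, (∀ i, s i ∈ ({-1, 0, 1} : Set ℤ)) →
      ∑ i, s i • γ i ∈ signedSums Λ := by
  induction d with
  | zero => exact ⟨∅, le_rfl, fun s _ => by simpa using zero_mem_signedSums ∅⟩
  | succ d ih =>
    obtain ⟨Λ, hcard, hΛ⟩ := ih (fun i => γ i.succ)
    obtain ⟨Λ', hcard', hΛ'⟩ := exists_superset_signedSums_zsmul_add Λ (γ 0)
    refine ⟨Λ', by omega, fun s hs => ?_⟩
    rw [Fin.sum_univ_succ]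
    exact hΛ' _ (hΛ _ fun i => hs i.succ) _ (hs 0)

end SignedSums

section Fourier
variable {G A : Type*} [AddCommGroup A] {u : A → G → ℂ}

lemma apply_sum_eq_prod (hmul : ∀ γ γ' x, u (γ + γ') x = u γ x * u γ' x) (hone : ∀ x, u 0 x = 1)
    {ι : Type*} (s : Finset ι) (g : ι → A) (x : G) : u (∑ i ∈ s, g i) x = ∏ i ∈ s, u (g i) x := by
  induction s using Finset.cons_induction with
  | empty => exact hone x
  | cons a s ha ih => rw [sum_cons, prod_cons, hmul, ih]

lemma exists_eq_of_sum_mul_conj_ne_zero [Fintype G]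
    (hmul : ∀ γ γ' x, u (γ + γ') x = u γ x * u γ' x) (hconj : ∀ γ x, u (-γ) x = conj (u γ x))
    (horth : ∀ γ : A, γ ≠ 0 → ∑ x, u γ x = 0) {ι : Type*} (s : Finset ι) (b : ι → ℂ)
    (freq : ι → A) {α : A} (h : ∑ x, (∑ i ∈ s, b i * u (freq i) x) * conj (u α x) ≠ 0) :
    ∃ i ∈ s, freq i = α := by
  contrapose! h
  calc ∑ x, (∑ i ∈ s, b i * u (freq i) x) * conj (u α x)
      = ∑ i ∈ s, b i * ∑ x, u (freq i - α) x := by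
        simp_rw [sum_mul, mul_sum, sub_eq_add_neg, hmul, hconj, mul_assoc]
        exact sum_comm
    _ = 0 := sum_eq_zero fun i hi => by rw [horth _ (sub_ne_zero.mpr (h i hi)), mul_zero]

lemma sum_signs_mul_apply (hone : ∀ x, u 0 x = 1) (hconj : ∀ γ x, u (-γ) x = conj (u γ x))
    (b : ℤ → ℂ) (γ : A) (x : G) :
    ∑ c ∈ ({-1, 0, 1} : Finset ℤ), b c * u (c • γ) x =
      b (-1) * conj (u γ x) + b 0 + b 1 * u γ x := by
  simp [hone, hconj, add_assoc]

lemma exists_one_add_mul_eq_sum (hone : ∀ x, u 0 x = 1) (hconj : ∀ γ x, u (-γ) x = conj (u γ x))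
    (γ : A) (ε : ℝ) {φ : G → ℝ}
    (hφ : φ = (fun x => (u γ x).re) ∨ φ = (fun x => (u γ x).im)) :
    ∃ b : ℤ → ℂ, ∀ x,
      ((1 + ε * φ x : ℝ) : ℂ) = ∑ c ∈ ({-1, 0, 1} : Finset ℤ), b c * u (c • γ) x := by
  rcases hφ with rfl | rfl
  · refine ⟨fun c => if c = 0 then 1 else ε / 2, fun x => ?_⟩
    simp only [sum_signs_mul_apply hone hconj, ofReal_add, ofReal_mul, ofReal_one, re_eq_add_conj]
    norm_num
    ring
  · refine ⟨fun c => if c = 0 then 1 else -c * I * ε / 2, fun x => ?_⟩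
    simp only [sum_signs_mul_apply hone hconj, ofReal_add, ofReal_mul, ofReal_one, im_eq_sub_conj]
    norm_num
    field_simp
    linear_combination (ε * u γ x - ε * conj (u γ x)) * I_sq

lemma prod_eq_sum_piFinset (hmul : ∀ γ γ' x, u (γ + γ') x = u γ x * u γ' x)
    (hone : ∀ x, u 0 x = 1) {ι : Type*} [Fintype ι] [DecidableEq ι] (γ : ι → A) (C : Finset ℤ)
    (f : ι → G → ℂ) (b : ι → ℤ → ℂ) (hf : ∀ i x, f i x = ∑ c ∈ C, b i c * u (c • γ i) x)
    (x : G) :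
    ∏ i, f i x = ∑ s ∈ Fintype.piFinset fun _ => C, (∏ i, b i (s i)) * u (∑ i, s i • γ i) x := by
  simp_rw [hf, prod_univ_sum, prod_mul_distrib, apply_sum_eq_prod hmul hone]

lemma exists_signed_sum_eq_of_fourier_ne_zero [Fintype G]
    (hmul : ∀ γ γ' x, u (γ + γ') x = u γ x * u γ' x) (hone : ∀ x, u 0 x = 1)
    (hconj : ∀ γ x, u (-γ) x = conj (u γ x)) (horth : ∀ γ : A, γ ≠ 0 → ∑ x, u γ x = 0)
    {d : ℕ} (γ : Fin d → A) (ε : Fin d → ℝ) (φ : Fin d → G → ℝ)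
    (hφ : ∀ i, (φ i = fun x => (u (γ i) x).re) ∨ (φ i = fun x => (u (γ i) x).im))
    (R : G → ℝ) (hR : ∀ x, R x = ∏ i, (1 + ε i * φ i x)) {α : A}
    (hα : ∑ x, (R x : ℂ) * conj (u α x) ≠ 0) :
    ∃ s : Fin d → ℤ, (∀ i, s i ∈ ({-1, 0, 1} : Set ℤ)) ∧ ∑ i, s i • γ i = α := by
  choose b hb using fun i => exists_one_add_mul_eq_sum hone hconj (γ i) (ε i) (hφ i)
  have hRexp : ∀ x, (R x : ℂ) = ∑ s ∈ Fintype.piFinset fun _ => ({-1, 0, 1} : Finset ℤ),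
      (∏ i, b i (s i)) * u (∑ i, s i • γ i) x := fun x => by
    rw [hR, ofReal_prod]
    exact prod_eq_sum_piFinset hmul hone γ _ _ b hb x
  simp_rw [hRexp] at hα
  obtain ⟨s, hs, hsα⟩ := exists_eq_of_sum_mul_conj_ne_zero hmul hconj horth _ _ _ hα
  exact ⟨s, fun i => by simpa using Fintype.mem_piFinset.mp hs i, hsα⟩

end Fourier

theorem riesz_product_spectrum_covered_general
    {G A : Type*} [Fintype G] [AddCommGroup A]
    (u : A → G → ℂ)
    (hmul : ∀ γ γ' x, u (γ + γ') x = u γ x * u γ' x)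
    (hone : ∀ x, u 0 x = 1)
    (hconj : ∀ γ x, u (-γ) x = (starRingEnd ℂ) (u γ x))
    (horth : ∀ γ : A, γ ≠ 0 → ∑ x, u γ x = 0)
    (d : ℕ) (γ : Fin d → A) (ε : Fin d → ℝ)
    (φ : Fin d → G → ℝ)
    (hφ : ∀ i, (φ i = fun x => (u (γ i) x).re) ∨ (φ i = fun x => (u (γ i) x).im))
    (R : G → ℝ) (hR : ∀ x, R x = ∏ i, (1 + ε i * φ i x)) :
    ∃ Λ : Finset A, Λ.card ≤ d ∧
      ∀ α : A,
        (∑ x, (R x : ℂ) * (starRingEnd ℂ) (u α x)) / (Fintype.card G : ℂ) ≠ 0 →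
        ∃ η : A → ℤ, (∀ lam, η lam ∈ ({-1, 0, 1} : Set ℤ)) ∧
          α = ∑ lam ∈ Λ, η lam • lam := by
  obtain ⟨Λ, hcard, hΛ⟩ := exists_signedSums_cover γ
  refine ⟨Λ, hcard, fun α hα => ?_⟩
  obtain ⟨s, hs, rfl⟩ := exists_signed_sum_eq_of_fourier_ne_zero hmul hone hconj horth γ ε φ hφ
    R hR (div_ne_zero_iff.mp hα).1
  exact hΛ s hs

/-- The nonzero Fourier spectrum of a degree-`d` Riesz product built from real
and imaginary parts of characters is covered by a set `Λ` of at most `d`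
frequencies: every `α` with `R̂(α) ≠ 0` is a `{−1,0,1}`-combination of `Λ`.
Here `G` is a finite abelian group with uniform measure, `A` its dual group,
and `u : A → G → ℂ` the character pairing. -/
theorem riesz_product_spectrum_covered
    {G A : Type*} [Fintype G] [Nonempty G] [AddCommGroup A] [DecidableEq A]
    (u : A → G → ℂ)
    (hmul : ∀ γ γ' x, u (γ + γ') x = u γ x * u γ' x)
    (hone : ∀ x, u 0 x = 1)
    (hconj : ∀ γ x, u (-γ) x = (starRingEnd ℂ) (u γ x))
    (hnorm : ∀ γ x, ‖u γ x‖ = 1)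
    (horth : ∀ γ : A, γ ≠ 0 → ∑ x, u γ x = 0)
    (d : ℕ) (γ : Fin d → A) (ε : Fin d → ℝ)
    (hε : ∀ i, ε i ∈ ({-1, 0, 1} : Set ℝ))
    (φ : Fin d → G → ℝ)
    (hφ : ∀ i, (φ i = fun x => (u (γ i) x).re) ∨ (φ i = fun x => (u (γ i) x).im))
    (R : G → ℝ) (hR : ∀ x, R x = ∏ i, (1 + ε i * φ i x)) :
    ∃ Λ : Finset A, Λ.card ≤ d ∧
      ∀ α : A,
        (∑ x, (R x : ℂ) * (starRingEnd ℂ) (u α x)) / (Fintype.card G : ℂ) ≠ 0 →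
        ∃ η : A → ℤ, (∀ lam, η lam ∈ ({-1, 0, 1} : Set ℤ)) ∧
          α = ∑ lam ∈ Λ, η lam • lam :=
  riesz_product_spectrum_covered_general u hmul hone hconj horth d γ ε φ hφ R hR
end

section
/- Let G be a finite abelian group with uniform measure μ, and let Λ ⊆ Ĝ be disassociated. Then the family F₁ = {Re u_γ : γ ∈ Λ} is Laplace pseudorandom: for all real coefficients (λ_γ)_{γ∈Λ}, log E_μ exp(Σ_{γ∈Λ} λ_γ Re u_γ) ≤ (1/2) Σ_{γ∈Λ} λ_γ². -/
/-!
Bound `exp (t x) ≤ cosh t + x sinh t` (convexity of `exp`, using `|Re u_γ| ≤ 1`) factor by factor.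
Writing `Re u_γ = (u_γ + u_{-γ}) / 2` and expanding the resulting product gives a sum over sign
patterns `ε ∈ {-1, 0, 1}^Λ` of multiples of the characters `u_{Σ ε_γ γ}`. Averaging over `G` kills
every character except the trivial one, and by disassociativity only `ε = 0` produces it, so the
average is `∏ cosh λ_γ ≤ exp (Σ λ_γ² / 2)`.
-/

open Finset Complex ComplexConjugate

theorem Real.prod_cosh_le_exp {ι : Type*} (s : Finset ι) (t : ι → ℝ) :
    ∏ i ∈ s, Real.cosh (t i) ≤ Real.exp ((1 / 2) * ∑ i ∈ s, t i ^ 2) := by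
  rw [mul_sum, Real.exp_sum]
  gcongr with i
  rw [one_div_mul_eq_div]
  exact Real.cosh_le_exp_half_sq _

theorem AddChar.map_sum_eq_prod {A M ι : Type*} [AddCommMonoid A] [CommMonoid M]
    (ψ : AddChar A M) (s : Finset ι) (a : ι → A) : ψ (∑ i ∈ s, a i) = ∏ i ∈ s, ψ (a i) :=
  map_prod ψ.toMonoidHom (fun i => Multiplicative.ofAdd (a i)) s

theorem AddChar.ofReal_cosh_add_re_mul_sinh {A : Type*} [AddCommGroup A] (χ : AddChar A ℂ)
    (a : A) (hconj : χ (-a) = conj (χ a)) (t : ℝ) :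
    ((Real.cosh t + (χ a).re * Real.sinh t : ℝ) : ℂ) =
      ∑ j ∈ ({-1, 0, 1} : Finset ℤ),
        (if j = 0 then (Real.cosh t : ℂ) else Real.sinh t / 2) * χ (j • a) := by
  have hre : ((χ a).re : ℂ) = (χ a + χ (-a)) / 2 := by
    rw [hconj, add_conj]; push_cast; ring
  simp [hre]
  ring

def IsDisassociated {ι A : Type*} [Fintype ι] [AddCommGroup A] (γ : ι → A) : Prop :=
  ∀ ε : ι → ℤ, (∀ i, ε i ∈ ({-1, 0, 1} : Set ℤ)) → ∑ i, ε i • γ i = 0 → ε = 0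

theorem isDisassociated_subtype_val {A : Type*} [AddCommGroup A] {Λ : Finset A}
    (hΛ : ∀ ε : A → ℤ, (∀ a ∈ Λ, ε a ∈ ({-1, 0, 1} : Set ℤ)) →
      ∑ a ∈ Λ, ε a • a = 0 → ∀ a ∈ Λ, ε a = 0) :
    IsDisassociated ((↑) : Λ → A) := by
  classical
  intro ε hε hsum
  let ε' : A → ℤ := fun a => if h : a ∈ Λ then ε ⟨a, h⟩ else 0
  have hε' := hΛ ε' (fun a ha => by simpa [ε', ha] using hε ⟨a, ha⟩)
    (by rw [← sum_coe_sort]; simpa [ε'] using hsum)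
  funext i
  simpa [ε'] using hε' i i.2

namespace IsDisassociated

variable {G A ι : Type*} [Fintype G] [AddCommGroup A] [Fintype ι] {γ : ι → A}
  (hγ : IsDisassociated γ) (ψ : G → AddChar A ℂ) (horth : ∀ a ≠ 0, ∑ x, ψ x a = 0)
include hγ horth

theorem sum_prod_sum_eq_card_mul_prod (c : ι → ℤ → ℂ) :
    ∑ x, ∏ i, ∑ j ∈ ({-1, 0, 1} : Finset ℤ), c i j * ψ x (j • γ i) =
      Fintype.card G * ∏ i, c i 0 := by
  classical
  have hexpand : ∀ x, ∏ i, ∑ j ∈ ({-1, 0, 1} : Finset ℤ), c i j * ψ x (j • γ i) =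
      ∑ ε ∈ Fintype.piFinset fun _ => ({-1, 0, 1} : Finset ℤ),
        (∏ i, c i (ε i)) * ψ x (∑ i, ε i • γ i) := fun x => by
    simp_rw [prod_univ_sum, prod_mul_distrib, AddChar.map_sum_eq_prod]
  simp_rw [hexpand]
  rw [sum_comm, sum_eq_single 0]
  · simp [mul_comm]
  · intro ε hε hne
    rw [← mul_sum, horth _ fun h => hne (hγ ε (by simpa using hε) h), mul_zero]
  · simp

theorem sum_prod_cosh_add_re_mul_sinh (hconj : ∀ x a, ψ x (-a) = conj (ψ x a)) (t : ι → ℝ) :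
    ∑ x, ∏ i, (Real.cosh (t i) + (ψ x (γ i)).re * Real.sinh (t i)) =
      Fintype.card G * ∏ i, Real.cosh (t i) := by
  have := hγ.sum_prod_sum_eq_card_mul_prod ψ horth
    fun i j => if j = 0 then (Real.cosh (t i) : ℂ) else Real.sinh (t i) / 2
  simp only [← AddChar.ofReal_cosh_add_re_mul_sinh _ _ (hconj _ _), ↓reduceIte] at this
  exact_mod_cast this

theorem sum_exp_le_card_mul_prod_cosh (hconj : ∀ x a, ψ x (-a) = conj (ψ x a))
    (hnorm : ∀ x a, ‖ψ x a‖ = 1) (t : ι → ℝ) :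
    ∑ x, Real.exp (∑ i, t i * (ψ x (γ i)).re) ≤ Fintype.card G * ∏ i, Real.cosh (t i) := by
  rw [← hγ.sum_prod_cosh_add_re_mul_sinh ψ horth hconj]
  gcongr with x
  rw [Real.exp_sum]
  gcongr with i
  rw [mul_comm]
  exact Real.exp_mul_le_cosh_add_mul_sinh ((abs_re_le_norm _).trans (hnorm x _).le) _

end IsDisassociated

theorem dissociated_laplace_pseudorandom_general
    {G A : Type*} [Fintype G] [Nonempty G] [AddCommGroup A]
    (u : A → G → ℂ)
    (hmul : ∀ γ γ' x, u (γ + γ') x = u γ x * u γ' x)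
    (hone : ∀ x, u 0 x = 1)
    (hconj : ∀ γ x, u (-γ) x = (starRingEnd ℂ) (u γ x))
    (hnorm : ∀ γ x, ‖u γ x‖ = 1)
    (horth : ∀ γ : A, γ ≠ 0 → ∑ x, u γ x = 0)
    (Λ : Finset A)
    (hdis : ∀ ε : A → ℤ, (∀ lam ∈ Λ, ε lam ∈ ({-1, 0, 1} : Set ℤ)) →
      ∑ lam ∈ Λ, ε lam • lam = 0 → ∀ lam ∈ Λ, ε lam = 0)
    (lam : A → ℝ) :
    Real.log ((∑ x, Real.exp (∑ γ ∈ Λ, lam γ * (u γ x).re)) / (Fintype.card G))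
      ≤ (1 / 2) * ∑ γ ∈ Λ, (lam γ) ^ 2 := by
  let ψ : G → AddChar A ℂ := fun x => ⟨(u · x), hone x, fun a b => hmul a b x⟩
  rw [Real.log_le_iff_le_exp (by positivity), div_le_iff₀ (by positivity), mul_comm]
  calc ∑ x, Real.exp (∑ γ ∈ Λ, lam γ * (u γ x).re)
      ≤ Fintype.card G * ∏ γ ∈ Λ, Real.cosh (lam γ) := by
        simp_rw [← sum_coe_sort Λ, ← prod_coe_sort Λ]
        exact (isDisassociated_subtype_val hdis).sum_exp_le_card_mul_prod_cosh ψ horth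
          (fun x a => hconj a x) (fun x a => hnorm a x) (fun γ => lam γ)
    _ ≤ Fintype.card G * Real.exp ((1 / 2) * ∑ γ ∈ Λ, lam γ ^ 2) := by
        gcongr
        exact Real.prod_cosh_le_exp Λ lam

/-- If `Λ` is a disassociated subset of the dual group of a finite abelian
group `G` (with uniform measure), then the family `{Re u_γ : γ ∈ Λ}` is
Laplace pseudorandom:
`log 𝔼_μ exp(Σ_{γ∈Λ} λ_γ Re u_γ) ≤ (1/2) Σ_{γ∈Λ} λ_γ²`. -/
theorem dissociated_laplace_pseudorandom
    {G A : Type*} [Fintype G] [Nonempty G] [AddCommGroup A] [DecidableEq A]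
    (u : A → G → ℂ)
    (hmul : ∀ γ γ' x, u (γ + γ') x = u γ x * u γ' x)
    (hone : ∀ x, u 0 x = 1)
    (hconj : ∀ γ x, u (-γ) x = (starRingEnd ℂ) (u γ x))
    (hnorm : ∀ γ x, ‖u γ x‖ = 1)
    (horth : ∀ γ : A, γ ≠ 0 → ∑ x, u γ x = 0)
    (Λ : Finset A)
    (hdis : ∀ ε : A → ℤ, (∀ lam ∈ Λ, ε lam ∈ ({-1, 0, 1} : Set ℤ)) →
      ∑ lam ∈ Λ, ε lam • lam = 0 → ∀ lam ∈ Λ, ε lam = 0)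
    (lam : A → ℝ) :
    Real.log ((∑ x, Real.exp (∑ γ ∈ Λ, lam γ * (u γ x).re)) / (Fintype.card G))
      ≤ (1 / 2) * ∑ γ ∈ Λ, (lam γ) ^ 2 :=
  dissociated_laplace_pseudorandom_general u hmul hone hconj hnorm horth Λ hdis lam
end

section
/- Let G be a finite abelian group with uniform measure μ, let f : G → [0,∞) be a density (E_μ f = 1), let δ > 0, and let Λ ⊆ Spec_δ(f) be disassociated. Then |Λ| ≤ 4 Ent_μ(f)/δ². -/
open Finset Complex

/-!
Put `g = ∑_{γ ∈ Λ} Re (f̂(γ) u_γ)`, so that `E_μ[f g] = ∑_{γ ∈ Λ} |f̂(γ)|²`. Bounding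
`exp (Re (b u_γ))` by the affine function `cosh |b| + Re (b u_γ) sinh |b| / |b|` of `u_γ` and
expanding the product, dissociativity kills every non-constant term on averaging, so
`E_μ[exp g] ≤ exp (∑ |f̂(γ)|² / 2)`. Gibbs' inequality `E_μ[f g] ≤ Ent_μ(f) + log E_μ[exp g]` then
gives `∑_{γ ∈ Λ} |f̂(γ)|² ≤ 2 Ent_μ(f)`, and each term exceeds `δ²`.
-/

lemma Real.mul_le_mul_log_add_exp_sub_one {a : ℝ} (ha : 0 ≤ a) (b : ℝ) :
    a * b ≤ a * Real.log a + Real.exp (b - 1) := by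
  rcases ha.eq_or_lt with rfl | ha
  · simpa using (Real.exp_pos _).le
  have key : a * (b - Real.log a) ≤ a * Real.exp (b - Real.log a - 1) := by
    gcongr; linarith [Real.add_one_le_exp (b - Real.log a - 1)]
  have hexp : a * Real.exp (b - Real.log a - 1) = Real.exp (b - 1) := by
    rw [sub_right_comm, Real.exp_sub _ (Real.log a), Real.exp_log ha, mul_div_cancel₀ _ ha.ne']
  linarith

/-- Gibbs' variational inequality. -/
lemma sum_mul_le_sum_mul_log_add_mul_sum {ι : Type*} (s : Finset ι) {f g : ι → ℝ}
    (hf : ∀ i ∈ s, 0 ≤ f i) {L : ℝ}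
    (hg : ∑ i ∈ s, Real.exp (g i) ≤ (∑ i ∈ s, f i) * Real.exp L) :
    ∑ i ∈ s, f i * g i ≤ ∑ i ∈ s, f i * Real.log (f i) + L * ∑ i ∈ s, f i := by
  have young : ∑ i ∈ s, f i * (g i - L + 1)
      ≤ ∑ i ∈ s, (f i * Real.log (f i) + Real.exp (g i - L)) :=
    sum_le_sum fun i hi => by
      simpa using Real.mul_le_mul_log_add_exp_sub_one (hf i hi) (g i - L + 1)
  have hexp : ∑ i ∈ s, Real.exp (g i - L) ≤ ∑ i ∈ s, f i := by
    simp_rw [Real.exp_sub, ← sum_div]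
    exact div_le_of_le_mul₀ (Real.exp_pos L).le (sum_nonneg hf) hg
  simp only [mul_add, mul_sub, mul_one, sum_add_distrib, sum_sub_distrib, ← sum_mul] at young
  linarith

lemma sum_mul_re_mul_eq_re_mul_conj_sum {ι : Type*} (s : Finset ι) (f : ι → ℝ) (v : ι → ℂ)
    (z : ℂ) :
    ∑ i ∈ s, f i * (z * v i).re
      = (z * (starRingEnd ℂ) (∑ i ∈ s, f i * (starRingEnd ℂ) (v i))).re := by
  simp only [map_sum, map_mul, conj_ofReal, conj_conj, mul_sum, re_sum]
  exact sum_congr rfl fun i _ => by rw [mul_left_comm, re_ofReal_mul]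

section Characters

variable {G A : Type*} [AddCommGroup A] (u : A → G → ℂ)

lemma prod_apply_eq_apply_sum (hmul : ∀ γ γ' x, u (γ + γ') x = u γ x * u γ' x)
    (hone : ∀ x, u 0 x = 1) {ι : Type*} (s : Finset ι) (g : ι → A) (x : G) :
    ∏ i ∈ s, u (g i) x = u (∑ i ∈ s, g i) x := by
  induction s using Finset.cons_induction with
  | empty => simp [hone]
  | cons i s hi ih => rw [prod_cons, sum_cons, hmul, ih]

lemma eq_zero_of_mem_pi_of_sum_zsmul_eq_zero [DecidableEq A] {Λ : Finset A}
    (hdis : ∀ ε : A → ℤ, (∀ lam ∈ Λ, ε lam ∈ ({-1, 0, 1} : Set ℤ)) →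
      ∑ lam ∈ Λ, ε lam • lam = 0 → ∀ lam ∈ Λ, ε lam = 0)
    {p : ∀ γ ∈ Λ, ℤ} (hp : p ∈ Λ.pi fun _ => ({-1, 0, 1} : Finset ℤ))
    (hsum : ∑ γ ∈ Λ.attach, p γ γ.2 • (γ : A) = 0) :
    p = fun _ _ => 0 := by
  let ε : A → ℤ := fun a => if h : a ∈ Λ then p a h else 0
  have hε : ∑ lam ∈ Λ, ε lam • lam = 0 := by
    rw [← hsum, ← sum_attach]
    exact sum_congr rfl fun γ _ => by simp [ε, γ.2]
  have hvals : ∀ lam ∈ Λ, ε lam ∈ ({-1, 0, 1} : Set ℤ) := fun lam h => by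
    simpa [ε, h] using mem_pi.1 hp lam h
  funext a h
  simpa [ε, h] using hdis ε hvals hε a h

/-- The Riesz product identity: on a dissociated set, only the constant terms of the expanded
product survive averaging. -/
lemma sum_prod_sum_mul_apply_zsmul [Fintype G]
    (hmul : ∀ γ γ' x, u (γ + γ') x = u γ x * u γ' x) (hone : ∀ x, u 0 x = 1)
    (horth : ∀ γ : A, γ ≠ 0 → ∑ x, u γ x = 0) {Λ : Finset A}
    (hdis : ∀ ε : A → ℤ, (∀ lam ∈ Λ, ε lam ∈ ({-1, 0, 1} : Set ℤ)) →
      ∑ lam ∈ Λ, ε lam • lam = 0 → ∀ lam ∈ Λ, ε lam = 0)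
    (c : A → ℤ → ℂ) :
    ∑ x, ∏ γ ∈ Λ, ∑ d ∈ ({-1, 0, 1} : Finset ℤ), c γ d * u (d • γ) x
      = Fintype.card G * ∏ γ ∈ Λ, c γ 0 := by
  classical
  have hchar : ∀ p ∈ Λ.pi fun _ => ({-1, 0, 1} : Finset ℤ),
      ∑ x, u (∑ γ ∈ Λ.attach, p γ γ.2 • (γ : A)) x
        = if p = (fun _ _ => 0) then (Fintype.card G : ℂ) else 0 := by
    intro p hp
    split_ifs with h
    · simp [h, hone]
    · exact horth _ fun hsum => h (eq_zero_of_mem_pi_of_sum_zsmul_eq_zero hdis hp hsum)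
  have hzero : (fun _ _ => 0) ∈ Λ.pi fun _ => ({-1, 0, 1} : Finset ℤ) :=
    mem_pi.2 fun _ _ => by simp
  simp_rw [prod_sum, sum_comm (γ := G), prod_mul_distrib, prod_apply_eq_apply_sum u hmul hone,
    ← mul_sum]
  rw [sum_congr rfl fun p hp => by rw [hchar p hp]]
  simp only [mul_ite, mul_zero, sum_ite_eq', hzero, if_true]
  rw [prod_attach Λ fun γ => c γ 0, mul_comm]

lemma sum_prod_add_re_mul_apply [Fintype G]
    (hmul : ∀ γ γ' x, u (γ + γ') x = u γ x * u γ' x) (hone : ∀ x, u 0 x = 1)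
    (hconj : ∀ γ x, u (-γ) x = (starRingEnd ℂ) (u γ x))
    (horth : ∀ γ : A, γ ≠ 0 → ∑ x, u γ x = 0) {Λ : Finset A}
    (hdis : ∀ ε : A → ℤ, (∀ lam ∈ Λ, ε lam ∈ ({-1, 0, 1} : Set ℤ)) →
      ∑ lam ∈ Λ, ε lam • lam = 0 → ∀ lam ∈ Λ, ε lam = 0)
    (α : A → ℝ) (β : A → ℂ) :
    ∑ x, ∏ γ ∈ Λ, (α γ + (β γ * u γ x).re) = Fintype.card G * ∏ γ ∈ Λ, α γ := by
  let c : A → ℤ → ℂ := fun γ d =>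
    if d = 1 then β γ / 2 else if d = -1 then (starRingEnd ℂ) (β γ) / 2 else α γ
  have hfactor : ∀ γ x, (α γ : ℂ) + ((β γ * u γ x).re : ℂ)
      = ∑ d ∈ ({-1, 0, 1} : Finset ℤ), c γ d * u (d • γ) x := by
    intro γ x
    rw [re_eq_add_conj, map_mul, ← hconj, sum_insert (by decide), sum_insert (by decide),
      sum_singleton]
    simp [c, hone]
    ring
  apply ofReal_injective
  push_cast
  simp_rw [hfactor]
  rw [sum_prod_sum_mul_apply_zsmul u hmul hone horth hdis]
  simp [c]

lemma sum_exp_sum_re_mul_le [Fintype G]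
    (hmul : ∀ γ γ' x, u (γ + γ') x = u γ x * u γ' x) (hone : ∀ x, u 0 x = 1)
    (hconj : ∀ γ x, u (-γ) x = (starRingEnd ℂ) (u γ x)) (hnorm : ∀ γ x, ‖u γ x‖ = 1)
    (horth : ∀ γ : A, γ ≠ 0 → ∑ x, u γ x = 0) {Λ : Finset A}
    (hdis : ∀ ε : A → ℤ, (∀ lam ∈ Λ, ε lam ∈ ({-1, 0, 1} : Set ℤ)) →
      ∑ lam ∈ Λ, ε lam • lam = 0 → ∀ lam ∈ Λ, ε lam = 0)
    (b : A → ℂ) :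
    ∑ x, Real.exp (∑ γ ∈ Λ, (b γ * u γ x).re)
      ≤ Fintype.card G * Real.exp ((∑ γ ∈ Λ, ‖b γ‖ ^ 2) / 2) := by
  let c : A → ℂ := fun γ => b γ / ‖b γ‖
  have hb : ∀ γ x, (b γ * u γ x).re = (c γ * u γ x).re * ‖b γ‖ := by
    intro γ x
    rcases eq_or_ne (b γ) 0 with h | h
    · simp [h]
    · rw [mul_comm _ (‖b γ‖ : ℝ), ← re_ofReal_mul, ← mul_assoc,
        mul_div_cancel₀ _ (by simpa using h)]
  have hc : ∀ γ x, |(c γ * u γ x).re| ≤ 1 := fun γ x =>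
    calc |(c γ * u γ x).re| ≤ ‖c γ * u γ x‖ := abs_re_le_norm _
      _ ≤ 1 := by simpa [c, hnorm, norm_div] using div_self_le_one ‖b γ‖
  calc ∑ x, Real.exp (∑ γ ∈ Λ, (b γ * u γ x).re)
      ≤ ∑ x, ∏ γ ∈ Λ, (Real.cosh ‖b γ‖ + ((Real.sinh ‖b γ‖ * c γ) * u γ x).re) := by
        gcongr with x
        rw [Real.exp_sum]
        refine prod_le_prod (fun _ _ => (Real.exp_pos _).le) fun γ _ => ?_
        rw [hb, mul_assoc, re_ofReal_mul, mul_comm (Real.sinh _)]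
        exact Real.exp_mul_le_cosh_add_mul_sinh (hc γ x) _
    _ = Fintype.card G * ∏ γ ∈ Λ, Real.cosh ‖b γ‖ :=
        sum_prod_add_re_mul_apply u hmul hone hconj horth hdis _ _
    _ ≤ Fintype.card G * ∏ γ ∈ Λ, Real.exp (‖b γ‖ ^ 2 / 2) := by
        gcongr with γ
        exact Real.cosh_le_exp_half_sq _
    _ = Fintype.card G * Real.exp ((∑ γ ∈ Λ, ‖b γ‖ ^ 2) / 2) := by
        rw [← Real.exp_sum, sum_div]

end Characters

theorem dissociated_in_spectrum_card_bound_general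
    {G A : Type*} [Fintype G] [AddCommGroup A]
    (u : A → G → ℂ)
    (hmul : ∀ γ γ' x, u (γ + γ') x = u γ x * u γ' x)
    (hone : ∀ x, u 0 x = 1)
    (hconj : ∀ γ x, u (-γ) x = (starRingEnd ℂ) (u γ x))
    (hnorm : ∀ γ x, ‖u γ x‖ = 1)
    (horth : ∀ γ : A, γ ≠ 0 → ∑ x, u γ x = 0)
    (f : G → ℝ) (hf0 : ∀ x, 0 ≤ f x)
    (hf1 : (∑ x, f x) / (Fintype.card G) = 1)
    (δ : ℝ) (hδ : 0 < δ)
    (Λ : Finset A)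
    (hΛspec : ∀ γ ∈ Λ,
      ‖(∑ x, (f x : ℂ) * (starRingEnd ℂ) (u γ x)) / (Fintype.card G : ℂ)‖ > δ)
    (hdis : ∀ ε : A → ℤ, (∀ lam ∈ Λ, ε lam ∈ ({-1, 0, 1} : Set ℤ)) →
      ∑ lam ∈ Λ, ε lam • lam = 0 → ∀ lam ∈ Λ, ε lam = 0) :
    (Λ.card : ℝ) ≤ 4 * ((∑ x, f x * Real.log (f x)) / (Fintype.card G)) / δ ^ 2 := by
  set F : A → ℂ := fun γ => (∑ x, (f x : ℂ) * (starRingEnd ℂ) (u γ x)) / (Fintype.card G : ℂ)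
  set S := ∑ γ ∈ Λ, ‖F γ‖ ^ 2
  have hN : (0 : ℝ) < Fintype.card G := (Nat.cast_nonneg _).lt_of_ne fun h => by
    simp [← h] at hf1
  have hfN : ∑ x, f x = Fintype.card G := (div_eq_one_iff_eq hN.ne').1 hf1
  have hcorr : ∑ x, f x * ∑ γ ∈ Λ, (F γ * u γ x).re = S * Fintype.card G := by
    simp_rw [mul_sum]
    rw [sum_comm, sum_mul]
    refine sum_congr rfl fun γ _ => ?_
    have hF : ∑ x, (f x : ℂ) * (starRingEnd ℂ) (u γ x) = F γ * Fintype.card G :=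
      (div_mul_cancel₀ _ (by exact_mod_cast hN.ne')).symm
    rw [sum_mul_re_mul_eq_re_mul_conj_sum, hF, map_mul, ← mul_assoc, mul_conj', map_natCast]
    norm_cast
  have hgibbs := sum_mul_le_sum_mul_log_add_mul_sum univ (fun x _ => hf0 x) (L := S / 2)
    (hfN ▸ sum_exp_sum_re_mul_le u hmul hone hconj hnorm horth hdis F)
  rw [hcorr, hfN] at hgibbs
  have hcard : (Λ.card : ℝ) * δ ^ 2 ≤ S := by
    rw [← nsmul_eq_mul]
    exact card_nsmul_le_sum Λ _ _ fun γ hγ => pow_le_pow_left₀ hδ.le (hΛspec γ hγ).le 2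
  have hS : S ≤ 2 * ((∑ x, f x * Real.log (f x)) / Fintype.card G) := by
    rw [mul_div_assoc', le_div_iff₀ hN]; linarith
  rw [le_div_iff₀ (by positivity)]
  linarith [mul_nonneg (Nat.cast_nonneg (α := ℝ) Λ.card) (sq_nonneg δ)]

/-- Rudin/Chang bound: if `f` is a density on a finite abelian group `G` with
uniform measure and `Λ ⊆ Spec_δ(f)` is disassociated, then
`|Λ| ≤ 4 Ent_μ(f) / δ²`. -/
theorem dissociated_in_spectrum_card_bound
    {G A : Type*} [Fintype G] [Nonempty G] [AddCommGroup A] [DecidableEq A]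
    (u : A → G → ℂ)
    (hmul : ∀ γ γ' x, u (γ + γ') x = u γ x * u γ' x)
    (hone : ∀ x, u 0 x = 1)
    (hconj : ∀ γ x, u (-γ) x = (starRingEnd ℂ) (u γ x))
    (hnorm : ∀ γ x, ‖u γ x‖ = 1)
    (horth : ∀ γ : A, γ ≠ 0 → ∑ x, u γ x = 0)
    (f : G → ℝ) (hf0 : ∀ x, 0 ≤ f x)
    (hf1 : (∑ x, f x) / (Fintype.card G) = 1)
    (δ : ℝ) (hδ : 0 < δ)
    (Λ : Finset A)
    (hΛspec : ∀ γ ∈ Λ,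
      ‖(∑ x, (f x : ℂ) * (starRingEnd ℂ) (u γ x)) / (Fintype.card G : ℂ)‖ > δ)
    (hdis : ∀ ε : A → ℤ, (∀ lam ∈ Λ, ε lam ∈ ({-1, 0, 1} : Set ℤ)) →
      ∑ lam ∈ Λ, ε lam • lam = 0 → ∀ lam ∈ Λ, ε lam = 0) :
    (Λ.card : ℝ) ≤ 4 * ((∑ x, f x * Real.log (f x)) / (Fintype.card G)) / δ ^ 2 :=
  dissociated_in_spectrum_card_bound_general u hmul hone hconj hnorm horth f hf0 hf1 δ hδ Λ hΛspec
    hdis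
end

section
/- Let X be a finite probability space with measure μ, f a density, F₀ a finite family of functions with ‖φ‖_∞ ≤ 1 for φ ∈ F₀, and δ > 0. Suppose λ* = (λ*_φ)_{φ∈F₀} with λ*_φ ≥ 0 maximizes the dual objective D(λ) = −log E_μ exp(Σ_φ λ_φ φ) + Σ_φ λ_φ(⟨f,φ⟩ − δ) over nonnegative λ. Then Σ_{φ∈F₀} λ*_φ ≤ Ent_μ(f)/δ. -/
open Finset Real

/-- Bound on the optimal dual multipliers: if `lam⋆ ≥ 0` maximizes the dual
objective `D(λ) = −log 𝔼_μ exp(Σ λ_φ φ) + Σ λ_φ (⟨f,φ⟩ − δ)` over nonnegative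
multipliers, then `Σ_φ lam⋆_φ ≤ Ent_μ(f)/δ`. -/
theorem dual_multiplier_bound {X ι : Type*} [Fintype X] (μ : X → ℝ)
    (hμ0 : ∀ x, 0 ≤ μ x) (hμ1 : ∑ x, μ x = 1)
    (f : X → ℝ) (hf0 : ∀ x, 0 ≤ f x) (hf1 : ∑ x, μ x * f x = 1)
    (F₀ : Finset ι) (φ : ι → X → ℝ) (hφ : ∀ i ∈ F₀, ∀ x, |φ i x| ≤ 1)
    (δ : ℝ) (hδ : 0 < δ)
    (lamStar : ι → ℝ) (hlamStar : ∀ i ∈ F₀, 0 ≤ lamStar i)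
    (hopt : ∀ lam : ι → ℝ, (∀ i ∈ F₀, 0 ≤ lam i) →
      -Real.log (∑ x, μ x * Real.exp (∑ i ∈ F₀, lam i * φ i x))
          + ∑ i ∈ F₀, lam i * ((∑ x, μ x * (f x * φ i x)) - δ)
        ≤ -Real.log (∑ x, μ x * Real.exp (∑ i ∈ F₀, lamStar i * φ i x))
          + ∑ i ∈ F₀, lamStar i * ((∑ x, μ x * (f x * φ i x)) - δ)) :
    ∑ i ∈ F₀, lamStar i ≤ (∑ x, μ x * (f x * Real.log (f x))) / δ := by
  set S : X → ℝ := fun x => ∑ i ∈ F₀, lamStar i * φ i x with hS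
  set Z : ℝ := ∑ x, μ x * Real.exp (S x) with hZ
  have hZpos : 0 < Z := by
    have hx : ∃ x : X, 0 < μ x := by
      by_contra h
      push_neg at h
      have : (∑ x, μ x) = 0 := Finset.sum_eq_zero fun x _ => le_antisymm (h x) (hμ0 x)
      simp [this] at hμ1
    obtain ⟨x₀, hx₀⟩ := hx
    refine Finset.sum_pos' (fun x _ => mul_nonneg (hμ0 x) (Real.exp_pos _).le) ⟨x₀, Finset.mem_univ _, ?_⟩
    exact mul_pos hx₀ (Real.exp_pos _)
  -- D(λ*) ≥ D(0) = 0
  have h0 : (0:ℝ) ≤ -Real.log Z + ∑ i ∈ F₀, lamStar i * ((∑ x, μ x * (f x * φ i x)) - δ) := by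
    have := hopt (fun _ => 0) (fun i _ => le_refl 0)
    simpa [hμ1] using this
  -- swap sums: ∑_i λ* ⟨f,φ_i⟩ = ∑_x μ f S
  have hswap : ∑ i ∈ F₀, lamStar i * (∑ x, μ x * (f x * φ i x))
      = ∑ x, μ x * (f x * S x) := by
    simp only [hS, Finset.mul_sum]
    rw [Finset.sum_comm]
    exact Finset.sum_congr rfl fun x _ => Finset.sum_congr rfl fun i _ => by ring
  -- Gibbs inequality: ∑ μ f S − log Z ≤ Ent
  have hgibbs : (∑ x, μ x * (f x * S x)) - Real.log Z
      ≤ ∑ x, μ x * (f x * Real.log (f x)) := by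
    have hpt : ∀ x, μ x * (f x * S x) - μ x * f x * Real.log Z
        - μ x * (f x * Real.log (f x)) ≤ μ x * Real.exp (S x) / Z - μ x * f x := by
      intro x
      rcases eq_or_lt_of_le (hf0 x) with h | h
      · simp only [← h]
        have : 0 ≤ μ x * Real.exp (S x) / Z :=
          div_nonneg (mul_nonneg (hμ0 x) (Real.exp_pos _).le) hZpos.le
        simpa using this
      · have hfx : 0 < f x := h
        have harg : 0 < Real.exp (S x) / (Z * f x) :=
          div_pos (Real.exp_pos _) (mul_pos hZpos hfx)
        have hlog := Real.log_le_sub_one_of_pos harg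
        rw [Real.log_div (Real.exp_pos _).ne' (mul_pos hZpos hfx).ne',
          Real.log_exp, Real.log_mul hZpos.ne' hfx.ne'] at hlog
        have hmul := mul_le_mul_of_nonneg_left hlog (mul_nonneg (hμ0 x) hfx.le)
        have hrw : μ x * f x * (Real.exp (S x) / (Z * f x) - 1)
            = μ x * Real.exp (S x) / Z - μ x * f x := by
          field_simp
        nlinarith [hmul, hrw]
    have hsum := Finset.sum_le_sum (fun x (_ : x ∈ Finset.univ) => hpt x)
    have hl : ∑ x, (μ x * (f x * S x) - μ x * f x * Real.log Z
        - μ x * (f x * Real.log (f x)))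
        = (∑ x, μ x * (f x * S x)) - Real.log Z - ∑ x, μ x * (f x * Real.log (f x)) := by
      rw [Finset.sum_sub_distrib, Finset.sum_sub_distrib, ← Finset.sum_mul, hf1]
      ring
    have hr : ∑ x, (μ x * Real.exp (S x) / Z - μ x * f x) = 0 := by
      rw [Finset.sum_sub_distrib, hf1, ← Finset.sum_div, ← hZ, div_self hZpos.ne']
      ring
    rw [hl, hr] at hsum
    linarith
  -- combine
  have hexp : ∑ i ∈ F₀, lamStar i * ((∑ x, μ x * (f x * φ i x)) - δ)
      = (∑ x, μ x * (f x * S x)) - δ * ∑ i ∈ F₀, lamStar i := by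
    simp only [mul_sub, Finset.sum_sub_distrib, hswap, ← Finset.sum_mul]
    ring
  rw [hexp] at h0
  rw [le_div_iff₀ hδ]
  nlinarith [hgibbs, h0]
end
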